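/- arXiv:2008.13444 — 3 statements merged into one kernel-verified Lean document; each statement's English description precedes it below -/
import Mathlib

section
/- Let σ ∈ (0,1], A ≥ 0, μ > 0 and α ≥ 1/(2μ), and set c = 1/(2μ). Let f(x) = (1/σ²) e^{-(x+A)/σ²} I₀(2√(xA)/σ²) be the noncentral chi-squared density and F(y) = ∫₀^y f(x) dx its CDF. Then the integral of f against the piecewise-linear function Z admits the exact closed form ∫₀^∞ f(x) Z(x) dx = F(α−c) + (1/2 + μα)·(F(α+c) − F(α−c)) − μ e^{-A/σ²} ∑_{i=0}^∞ (A^i σ^{2−2i}/(i!)²) · ( Γ(i+2, (α−c)/σ²) − Γ(i+2, (α+c)/σ²) ), where Γ(s, x) = ∫_x^∞ t^{s−1} e^{-t} dt is the upper incomplete gamma function (this is the exact, untruncated version of the paper's Theorem 1). -/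
open MeasureTheory Real

noncomputable def besselI0 (z : ℝ) : ℝ := ∑' m : ℕ, (z / 2) ^ (2 * m) / ((Nat.factorial m : ℝ)) ^ 2

noncomputable def Zfun (μ α x : ℝ) : ℝ :=
  if x < α - 1 / (2 * μ) then 1
  else if x ≤ α + 1 / (2 * μ) then 1 / 2 - μ * (x - α)
  else 0

noncomputable def gammaUpper (s x : ℝ) : ℝ := ∫ t in Set.Ioi x, t ^ (s - 1) * Real.exp (-t)

/-!
Since `Z` equals `1` below `α - c`, is affine on `[α - c, α + c]` and vanishes beyond, the
integral is `F (α - c)` plus an affine combination of `∫ f` and of the first moment `∫ x f x` over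
`[α - c, α + c]`. Expanding `I₀` in its power series writes `x f x` as a series of multiples of
`x ^ (i + 1) * exp (-x / σ²)`, dominated on `[α - c, α + c]` by a summable constant sequence, so
it can be integrated termwise; substituting `t = x / σ²` turns each term into a difference of
upper incomplete gamma functions.
-/

open Set intervalIntegral
open scoped Nat Interval

lemma summable_pow_div_factorial_sq (t : ℝ) :
    Summable fun i : ℕ => t ^ i / (i ! : ℝ) ^ 2 := by
  refine Summable.of_norm_bounded (Real.summable_pow_div_factorial |t|) fun i => ?_
  rw [norm_div, norm_pow, norm_pow, Real.norm_eq_abs, Real.norm_natCast]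
  gcongr
  exact le_self_pow₀ (mod_cast Nat.one_le_iff_ne_zero.2 i.factorial_ne_zero) two_ne_zero

lemma besselI0_eq_tsum (z : ℝ) :
    besselI0 z = ∑' m : ℕ, (z ^ 2 / 4) ^ m / (m ! : ℝ) ^ 2 := by
  unfold besselI0
  congr! 2 with m
  rw [pow_mul, div_pow]
  norm_num

lemma continuous_besselI0 : Continuous besselI0 := by
  rw [continuous_iff_continuousAt]
  intro z
  set R := |z| + 1
  have hR : Icc (-R) R ∈ nhds z :=
    Icc_mem_nhds (by linarith [neg_abs_le z]) (by linarith [le_abs_self z])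
  have hcont : ContinuousOn (fun w : ℝ => ∑' m : ℕ, (w ^ 2 / 4) ^ m / (m ! : ℝ) ^ 2)
      (Icc (-R) R) := by
    refine continuousOn_tsum (fun m => by fun_prop) (summable_pow_div_factorial_sq (R ^ 2 / 4))
      fun m w hw => ?_
    rw [Real.norm_of_nonneg (by positivity)]
    have hw2 : w ^ 2 ≤ R ^ 2 := sq_le_sq' hw.1 hw.2
    gcongr
  simpa only [← funext besselI0_eq_tsum] using hcont.continuousAt hR

lemma gammaUpper_sub_gammaUpper {s u v : ℝ} (hs : 0 < s) (hu : 0 ≤ u) (hv : 0 ≤ v) :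
    gammaUpper s u - gammaUpper s v = ∫ t in u..v, t ^ (s - 1) * exp (-t) := by
  have hint : IntegrableOn (fun t : ℝ => t ^ (s - 1) * exp (-t)) (Ioi 0) := by
    simpa only [mul_comm] using GammaIntegral_convergent hs
  exact integral_Ioi_sub_Ioi' (hint.mono_set (Ioi_subset_Ioi hu))
    (hint.mono_set (Ioi_subset_Ioi hv))

lemma integral_pow_mul_exp_neg_div (n : ℕ) {c a b : ℝ} (hc : 0 < c) (ha : 0 ≤ a) (hb : 0 ≤ b) :
    ∫ x in a..b, x ^ n * exp (-x / c) =
      c ^ (n + 1) * (gammaUpper (n + 1) (a / c) - gammaUpper (n + 1) (b / c)) := by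
  have hscale := integral_comp_div (fun t : ℝ => (c * t) ^ n * exp (-t)) (a := a) (b := b) hc.ne'
  simp only [mul_div_cancel₀ _ hc.ne', mul_pow, mul_assoc, intervalIntegral.integral_const_mul,
    smul_eq_mul] at hscale
  rw [gammaUpper_sub_gammaUpper (by positivity) (by positivity) (by positivity),
    add_sub_cancel_right]
  simp only [neg_div, hscale, Real.rpow_natCast]
  ring

theorem intervalIntegral.hasSum_integral_of_norm_le {ι E : Type*} [Countable ι]
    [NormedAddCommGroup E] [NormedSpace ℝ E] [CompleteSpace E] {μ : Measure ℝ}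
    [IsLocallyFiniteMeasure μ] {a b : ℝ} {F : ι → ℝ → E} {u : ι → ℝ}
    (hF : ∀ i, IntervalIntegrable (F i) μ a b) (hu : Summable u)
    (hFu : ∀ i, ∀ x ∈ Ι a b, ‖F i x‖ ≤ u i) :
    HasSum (fun i => ∫ x in a..b, F i x ∂μ) (∫ x in a..b, ∑' i, F i x ∂μ) :=
  hasSum_integral_of_dominated_convergence (fun i _ => u i)
    (fun i => (hF i).def'.aestronglyMeasurable) (fun i => ae_of_all _ (hFu i))
    (ae_of_all _ fun _ _ => hu) intervalIntegrable_const
    (ae_of_all _ fun x hx => (hu.of_norm_bounded fun i => hFu i x hx).hasSum)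

noncomputable def ncChiSqDensity (σ A x : ℝ) : ℝ :=
  1 / σ ^ 2 * exp (-(x + A) / σ ^ 2) * besselI0 (2 * √(x * A) / σ ^ 2)

lemma continuous_ncChiSqDensity (σ A : ℝ) : Continuous (ncChiSqDensity σ A) := by
  unfold ncChiSqDensity
  have := continuous_besselI0
  fun_prop

lemma mul_ncChiSqDensity_eq_tsum {σ A x : ℝ} (hA : 0 ≤ A) (hx : 0 ≤ x) :
    x * ncChiSqDensity σ A x = ∑' i : ℕ, exp (-A / σ ^ 2) / σ ^ 2 *
      ((A / σ ^ 4) ^ i / (i ! : ℝ) ^ 2) * (x ^ (i + 1) * exp (-x / σ ^ 2)) := by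
  have hsq : (2 * √(x * A) / σ ^ 2) ^ 2 / 4 = x * A / σ ^ 4 := by
    rw [div_pow, mul_pow, sq_sqrt (mul_nonneg hx hA)]
    ring
  have hexp : exp (-(x + A) / σ ^ 2) = exp (-A / σ ^ 2) * exp (-x / σ ^ 2) := by
    rw [← exp_add]
    ring_nf
  rw [ncChiSqDensity, besselI0_eq_tsum, hsq, ← tsum_mul_left, ← tsum_mul_left]
  refine tsum_congr fun i => ?_
  rw [hexp]
  ring

lemma integral_mul_ncChiSqDensity {σ A a b : ℝ} (hσ : 0 < σ) (hA : 0 ≤ A) (ha : 0 ≤ a)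
    (hab : a ≤ b) :
    ∫ x in a..b, x * ncChiSqDensity σ A x =
      exp (-A / σ ^ 2) * ∑' i : ℕ, (A ^ i * σ ^ ((2 : ℤ) - 2 * (i : ℤ)) / (i ! : ℝ) ^ 2) *
        (gammaUpper ((i : ℝ) + 2) (a / σ ^ 2) - gammaUpper ((i : ℝ) + 2) (b / σ ^ 2)) := by
  set coeff : ℕ → ℝ := fun i => exp (-A / σ ^ 2) / σ ^ 2 * ((A / σ ^ 4) ^ i / (i ! : ℝ) ^ 2)
  have hterm : ∀ i : ℕ, ∫ x in a..b, coeff i * (x ^ (i + 1) * exp (-x / σ ^ 2)) =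
      exp (-A / σ ^ 2) * ((A ^ i * σ ^ ((2 : ℤ) - 2 * (i : ℤ)) / (i ! : ℝ) ^ 2) *
        (gammaUpper ((i : ℝ) + 2) (a / σ ^ 2) - gammaUpper ((i : ℝ) + 2) (b / σ ^ 2))) := by
    intro i
    rw [intervalIntegral.integral_const_mul,
      integral_pow_mul_exp_neg_div (i + 1) (by positivity) ha (ha.trans hab)]
    have hσi : σ ^ ((2 : ℤ) - 2 * (i : ℤ)) = (σ ^ 2) ^ (i + 2) / (σ ^ 2) ^ (2 * i + 1) := by
      rw [← pow_mul, ← pow_mul, ← zpow_natCast, ← zpow_natCast, ← zpow_sub₀ hσ.ne']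
      push_cast
      ring_nf
    push_cast
    rw [hσi, show (i : ℝ) + 1 + 1 = i + 2 by ring]
    simp only [coeff, div_pow]
    field_simp
    ring
  have hsummable : Summable fun i => coeff i * b ^ (i + 1) :=
    ((summable_pow_div_factorial_sq (A * b / σ ^ 4)).mul_left
      (exp (-A / σ ^ 2) / σ ^ 2 * b)).congr fun i => by ring
  have hbound : ∀ i, ∀ x ∈ Ι a b,
      ‖coeff i * (x ^ (i + 1) * exp (-x / σ ^ 2))‖ ≤ coeff i * b ^ (i + 1) := by
    intro i x hx
    rw [uIoc_of_le hab] at hx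
    have hx0 : 0 ≤ x := ha.trans hx.1.le
    have hexp : exp (-x / σ ^ 2) ≤ 1 :=
      exp_le_one_iff.2 (div_nonpos_of_nonpos_of_nonneg (by linarith) (by positivity))
    rw [Real.norm_of_nonneg (by positivity)]
    gcongr
    exact (mul_le_of_le_one_right (by positivity) hexp).trans (pow_le_pow_left₀ hx0 hx.2 _)
  have hsum := hasSum_integral_of_norm_le (μ := volume)
    (fun i => (by fun_prop : Continuous fun x => coeff i * (x ^ (i + 1) * exp (-x / σ ^ 2)))
      |>.intervalIntegrable a b)
    hsummable hbound
  rw [integral_congr fun x hx => mul_ncChiSqDensity_eq_tsum hA (ha.trans (uIcc_of_le hab ▸ hx).1),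
    ← hsum.tsum_eq, ← tsum_mul_left]
  exact tsum_congr hterm

section Zfun

variable {μ α x : ℝ}

lemma Zfun_eq_max_min (hμ : 0 < μ) :
    Zfun μ α x = max 0 (min 1 (1 / 2 - μ * (x - α))) := by
  have hμc : μ * (1 / (2 * μ)) = 1 / 2 := by field_simp
  unfold Zfun
  split_ifs with hlt hle
  · have := mul_lt_mul_of_pos_left (show x - α < -(1 / (2 * μ)) by linarith) hμ
    rw [min_eq_left (by linarith), max_eq_right zero_le_one]
  · have h₁ := mul_le_mul_of_nonneg_left (show -(1 / (2 * μ)) ≤ x - α by linarith) hμ.le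
    have h₂ := mul_le_mul_of_nonneg_left (show x - α ≤ 1 / (2 * μ) by linarith) hμ.le
    rw [min_eq_right (by linarith), max_eq_right (by linarith)]
  · have := mul_lt_mul_of_pos_left (show 1 / (2 * μ) < x - α by linarith) hμ
    rw [max_eq_left (min_le_of_right_le (by linarith))]

lemma continuous_Zfun (hμ : 0 < μ) (α : ℝ) : Continuous (Zfun μ α) := by
  simp_rw [funext fun x => Zfun_eq_max_min (α := α) (x := x) hμ]
  fun_prop

lemma Zfun_eq_one (hμ : 0 < μ) (hx : x ≤ α - 1 / (2 * μ)) : Zfun μ α x = 1 := by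
  have hμc : μ * (1 / (2 * μ)) = 1 / 2 := by field_simp
  have := mul_le_mul_of_nonneg_left (show x - α ≤ -(1 / (2 * μ)) by linarith) hμ.le
  rw [Zfun_eq_max_min hμ, min_eq_left (by linarith), max_eq_right zero_le_one]

lemma Zfun_eq_of_mem_Icc (hx : x ∈ Icc (α - 1 / (2 * μ)) (α + 1 / (2 * μ))) :
    Zfun μ α x = 1 / 2 - μ * (x - α) := by
  rw [Zfun, if_neg hx.1.not_gt, if_pos hx.2]

lemma Zfun_eq_zero (hμ : 0 ≤ μ) (hx : α + 1 / (2 * μ) < x) : Zfun μ α x = 0 := by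
  have : 0 ≤ 1 / (2 * μ) := by positivity
  rw [Zfun, if_neg (by linarith), if_neg hx.not_ge]

end Zfun

theorem stmt0_general (σ A μ α : ℝ) (hσ : 0 < σ) (hA : 0 ≤ A) (hμ : 0 < μ)
    (hα : 1 / (2 * μ) ≤ α)
    (f : ℝ → ℝ) (hf : f = fun x => (1 / σ ^ 2) * Real.exp (-(x + A) / σ ^ 2) *
      besselI0 (2 * Real.sqrt (x * A) / σ ^ 2))
    (F : ℝ → ℝ) (hF : F = fun y => ∫ x in (0:ℝ)..y, f x) :
    (∫ x in Set.Ioi (0:ℝ), f x * Zfun μ α x)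
      = F (α - 1 / (2 * μ))
        + (1 / 2 + μ * α) * (F (α + 1 / (2 * μ)) - F (α - 1 / (2 * μ)))
        - μ * Real.exp (-A / σ ^ 2) *
          ∑' i : ℕ, (A ^ i * σ ^ ((2 : ℤ) - 2 * (i : ℤ)) / ((Nat.factorial i : ℝ)) ^ 2) *
            (gammaUpper ((i : ℝ) + 2) ((α - 1 / (2 * μ)) / σ ^ 2)
              - gammaUpper ((i : ℝ) + 2) ((α + 1 / (2 * μ)) / σ ^ 2)) := by
  obtain rfl : f = ncChiSqDensity σ A := hf
  subst hF
  set a := α - 1 / (2 * μ)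
  set b := α + 1 / (2 * μ)
  have ha : 0 ≤ a := sub_nonneg.2 hα
  have hab : a ≤ b := by linarith [show 0 < 1 / (2 * μ) by positivity]
  have hf := continuous_ncChiSqDensity σ A
  have hxf : Continuous fun x => x * ncChiSqDensity σ A x := continuous_id.mul hf
  have hfZ := hf.mul (continuous_Zfun hμ α)
  calc ∫ x in Ioi 0, ncChiSqDensity σ A x * Zfun μ α x
      = ∫ x in 0..b, ncChiSqDensity σ A x * Zfun μ α x := by
        rw [integral_of_le (ha.trans hab)]
        refine setIntegral_eq_of_subset_of_forall_sdiff_eq_zero measurableSet_Ioi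
          Ioc_subset_Ioi_self fun x hx => ?_
        rw [Zfun_eq_zero hμ.le (not_le.1 fun h => hx.2 ⟨hx.1, h⟩), mul_zero]
    _ = (∫ x in 0..a, ncChiSqDensity σ A x * Zfun μ α x)
          + ∫ x in a..b, ncChiSqDensity σ A x * Zfun μ α x :=
        (integral_add_adjacent_intervals (hfZ.intervalIntegrable _ _)
          (hfZ.intervalIntegrable _ _)).symm
    _ = (∫ x in 0..a, ncChiSqDensity σ A x)
          + ∫ x in a..b, ((1 / 2 + μ * α) * ncChiSqDensity σ A x
              - μ * (x * ncChiSqDensity σ A x)) := by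
        congr 1 <;> refine integral_congr fun x hx => ?_
        · rw [Zfun_eq_one hμ (uIcc_of_le ha ▸ hx).2, mul_one]
        · rw [Zfun_eq_of_mem_Icc (uIcc_of_le hab ▸ hx)]
          ring
    _ = _ := by
        dsimp only
        rw [intervalIntegral.integral_sub ((hf.intervalIntegrable _ _).const_mul _)
            ((hxf.intervalIntegrable _ _).const_mul _),
          intervalIntegral.integral_const_mul, intervalIntegral.integral_const_mul,
          integral_interval_sub_left (hf.intervalIntegrable 0 b) (hf.intervalIntegrable 0 a),
          integral_mul_ncChiSqDensity hσ hA ha hab]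
        ring

/-- Exact closed form for the integral of the noncentral chi-squared density against the
piecewise-linear approximation of the Q-function (exact version of Theorem 1). -/
theorem stmt0 (σ A μ α : ℝ) (hσ : 0 < σ) (hσ1 : σ ≤ 1) (hA : 0 ≤ A) (hμ : 0 < μ)
    (hα : 1 / (2 * μ) ≤ α)
    (f : ℝ → ℝ) (hf : f = fun x => (1 / σ ^ 2) * Real.exp (-(x + A) / σ ^ 2) *
      besselI0 (2 * Real.sqrt (x * A) / σ ^ 2))
    (F : ℝ → ℝ) (hF : F = fun y => ∫ x in (0:ℝ)..y, f x) :
    (∫ x in Set.Ioi (0:ℝ), f x * Zfun μ α x)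
      = F (α - 1 / (2 * μ))
        + (1 / 2 + μ * α) * (F (α + 1 / (2 * μ)) - F (α - 1 / (2 * μ)))
        - μ * Real.exp (-A / σ ^ 2) *
          ∑' i : ℕ, (A ^ i * σ ^ ((2 : ℤ) - 2 * (i : ℤ)) / ((Nat.factorial i : ℝ)) ^ 2) *
            (gammaUpper ((i : ℝ) + 2) ((α - 1 / (2 * μ)) / σ ^ 2)
              - gammaUpper ((i : ℝ) + 2) ((α + 1 / (2 * μ)) / σ ^ 2)) :=
  stmt0_general σ A μ α hσ hA hμ hα f hf F hF
end

section
/- Let σ > 0 and let X and Y be independent real random variables with X Gaussian with mean m₁ and variance σ²/2 and Y Gaussian with mean m₂ and variance σ²/2. Set a = m₁² + m₂². Then for every y ≥ 0, the probability P(√(X² + Y²) ≤ y) equals ∫₀^y (2x/σ²) e^{-(x²+a)/σ²} I₀( 2x√a/σ² ) dx; i.e., √(X²+Y²) has the Rician density with parameters √a and σ. -/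
/-!
The joint density of `(X, Y)` is `(π σ²)⁻¹ exp (-‖p - m‖² / σ²)` with `m = (m₁, m₂)`. Writing
`p = (r cos θ, r sin θ)` and `m = (√a cos φ, √a sin φ)`, the exponent becomes
`-(r² + a) / σ² + (2 r √a / σ²) cos (θ - φ)`, so the angular integral reduces to
`∫_{-π}^{π} exp (c cos θ) dθ = 2π I₀(c)`. That identity follows by integrating the exponential
series termwise: the odd moments of `cos` over a period vanish, and
`∫_{-π}^{π} cos^{2k} = 2π (2k)! / (4^k (k!)²)`.
-/

open MeasureTheory ProbabilityTheory Real

theorem integral_cos_pow_add_two (n : ℕ) :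
    ∫ θ in (-π)..π, cos θ ^ (n + 2)
      = (n + 1) / (n + 2) * ∫ θ in (-π)..π, cos θ ^ n := by
  simp [integral_cos_pow]

theorem integral_cos_pow_odd (k : ℕ) : ∫ θ in (-π)..π, cos θ ^ (2 * k + 1) = 0 := by
  induction k with
  | zero => simp
  | succ k ih => rw [show 2 * (k + 1) + 1 = 2 * k + 1 + 2 by ring, integral_cos_pow_add_two, ih,
      mul_zero]

theorem integral_cos_pow_even (k : ℕ) :
    ∫ θ in (-π)..π, cos θ ^ (2 * k)
      = 2 * π * (2 * k).factorial / (4 ^ k * (k.factorial : ℝ) ^ 2) := by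
  induction k with
  | zero => simp; ring
  | succ k ih =>
    rw [show 2 * (k + 1) = 2 * k + 2 by ring, integral_cos_pow_add_two, ih]
    push_cast [Nat.factorial_succ]
    field_simp
    ring

theorem hasSum_besselI0 (z : ℝ) :
    HasSum (fun m : ℕ => (z / 2) ^ (2 * m) / (m.factorial : ℝ) ^ 2) (besselI0 z) := by
  refine Summable.hasSum (.of_nonneg_of_le (fun m => by rw [pow_mul]; positivity) (fun m => ?_)
    (summable_pow_div_factorial ((z / 2) ^ 2)))
  rw [pow_mul]
  exact div_le_div_of_nonneg_left (by positivity) (by positivity)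
    (le_self_pow₀ (Nat.one_le_cast.2 m.factorial_pos) two_ne_zero)

theorem hasSum_intervalIntegral_exp_mul_cos (c : ℝ) :
    HasSum (fun n : ℕ => ∫ θ in (-π)..π, (c * cos θ) ^ n / n.factorial)
      (∫ θ in (-π)..π, exp (c * cos θ)) := by
  refine intervalIntegral.hasSum_integral_of_dominated_convergence
    (fun n _ => |c| ^ n / n.factorial) (fun n => by fun_prop) (fun n => .of_forall fun θ _ => ?_)
    (.of_forall fun _ _ => summable_pow_div_factorial |c|) intervalIntegrable_const
    (.of_forall fun θ _ => ?_)
  · rw [norm_div, norm_pow, norm_mul, Real.norm_natCast, Real.norm_eq_abs, Real.norm_eq_abs]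
    gcongr
    exact mul_le_of_le_one_right (abs_nonneg c) (abs_cos_le_one θ)
  · rw [exp_eq_exp_ℝ]
    exact NormedSpace.expSeries_div_hasSum_exp _

theorem integral_exp_mul_cos (c : ℝ) :
    ∫ θ in (-π)..π, exp (c * cos θ) = 2 * π * besselI0 c := by
  refine (hasSum_intervalIntegral_exp_mul_cos c).unique ?_
  have hterm (n : ℕ) : ∫ θ in (-π)..π, (c * cos θ) ^ n / n.factorial
      = c ^ n * (∫ θ in (-π)..π, cos θ ^ n) / n.factorial := by
    rw [intervalIntegral.integral_div, ← intervalIntegral.integral_const_mul]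
    simp only [mul_pow]
  simp only [hterm]
  have heven : HasSum
      (fun k => c ^ (2 * k) * (∫ θ in (-π)..π, cos θ ^ (2 * k)) / (2 * k).factorial)
      (2 * π * besselI0 c) := by
    refine ((hasSum_besselI0 c).mul_left (2 * π)).congr_fun fun k => ?_
    have h4 : (2 : ℝ) ^ (2 * k) = 4 ^ k := by rw [pow_mul]; norm_num
    have : (2 * k).factorial ≠ 0 := Nat.factorial_ne_zero _
    rw [integral_cos_pow_even, div_pow, h4]
    field_simp
  have hodd : HasSum (fun k => c ^ (2 * k + 1) * (∫ θ in (-π)..π, cos θ ^ (2 * k + 1)) /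
      (2 * k + 1).factorial) 0 := by
    simp only [integral_cos_pow_odd, mul_zero, zero_div]
    exact hasSum_zero
  simpa only [add_zero] using HasSum.even_add_odd
    (f := fun n => c ^ n * (∫ θ in (-π)..π, cos θ ^ n) / n.factorial) heven hodd

theorem integral_exp_mul_cos_sub (c φ : ℝ) :
    ∫ θ in (-π)..π, exp (c * cos (θ - φ)) = 2 * π * besselI0 c := by
  have hper : Function.Periodic (fun θ => exp (c * cos θ)) (2 * π) := fun θ => by
    simp only [cos_add_two_pi]
  rw [intervalIntegral.integral_comp_sub_right (fun θ => exp (c * cos θ)),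
    show π - φ = -π - φ + 2 * π by ring, hper.intervalIntegral_add_eq,
    ← integral_exp_mul_cos c]
  congr 1
  ring

theorem exists_eq_sqrt_mul_cos_and_eq_sqrt_mul_sin (x y : ℝ) :
    ∃ φ, x = √(x ^ 2 + y ^ 2) * cos φ ∧ y = √(x ^ 2 + y ^ 2) * sin φ := by
  have hnorm : ‖(⟨x, y⟩ : ℂ)‖ = √(x ^ 2 + y ^ 2) := Complex.norm_eq_sqrt_sq_add_sq _
  exact ⟨Complex.arg ⟨x, y⟩, by rw [← hnorm, Complex.norm_mul_cos_arg],
    by rw [← hnorm, Complex.norm_mul_sin_arg]⟩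

theorem integral_exp_neg_sq_dist_circle (r m₁ m₂ σ : ℝ) :
    ∫ θ in (-π)..π, exp (-((r * cos θ - m₁) ^ 2 + (r * sin θ - m₂) ^ 2) / σ ^ 2)
      = 2 * π * exp (-(r ^ 2 + (m₁ ^ 2 + m₂ ^ 2)) / σ ^ 2)
          * besselI0 (2 * r * √(m₁ ^ 2 + m₂ ^ 2) / σ ^ 2) := by
  set s := √(m₁ ^ 2 + m₂ ^ 2)
  obtain ⟨φ, hm₁, hm₂⟩ := exists_eq_sqrt_mul_cos_and_eq_sqrt_mul_sin m₁ m₂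
  have hexponent (θ : ℝ) : -((r * cos θ - m₁) ^ 2 + (r * sin θ - m₂) ^ 2) / σ ^ 2
      = -(r ^ 2 + (m₁ ^ 2 + m₂ ^ 2)) / σ ^ 2 + 2 * r * s / σ ^ 2 * cos (θ - φ) := by
    rw [cos_sub]
    linear_combination (-r ^ 2 / σ ^ 2) * sin_sq_add_cos_sq θ + (2 * r * cos θ / σ ^ 2) * hm₁
      + (2 * r * sin θ / σ ^ 2) * hm₂
  simp only [hexponent, exp_add]
  rw [intervalIntegral.integral_const_mul, integral_exp_mul_cos_sub]
  ring

open Set in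
theorem setIntegral_sqrt_le_eq_integral_polar {E : Type*} [NormedAddCommGroup E]
    [NormedSpace ℝ E] {f : ℝ × ℝ → E} (hf : Continuous f) {R : ℝ} (hR : 0 ≤ R) :
    ∫ p in {p : ℝ × ℝ | √(p.1 ^ 2 + p.2 ^ 2) ≤ R}, f p
      = ∫ r in 0..R, r • ∫ θ in (-π)..π, f (r * cos θ, r * sin θ) := by
  set D := {p : ℝ × ℝ | √(p.1 ^ 2 + p.2 ^ 2) ≤ R}
  set g : ℝ × ℝ → E := fun p => p.1 • f (polarCoord.symm p)
  have hD : MeasurableSet D := measurableSet_le (by fun_prop) measurable_const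
  have hmem {p : ℝ × ℝ} (hp : 0 < p.1) :
      polarCoord.symm p ∈ D ↔ p ∈ Iic R ×ˢ univ := by
    have hsq : (p.1 * cos p.2) ^ 2 + (p.1 * sin p.2) ^ 2 = p.1 ^ 2 := by
      linear_combination p.1 ^ 2 * sin_sq_add_cos_sq p.2
    simp [D, hsq, sqrt_sq hp.le]
  have hg : IntegrableOn g (Ioc 0 R ×ˢ Ioo (-π) π) :=
    ((by fun_prop : Continuous g).continuousOn.integrableOn_compact
      (isCompact_Icc.prod isCompact_Icc)).mono_set
      (prod_mono Ioc_subset_Icc_self Ioo_subset_Icc_self)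
  calc ∫ p in D, f p = ∫ p, D.indicator f p := (integral_indicator hD).symm
    _ = ∫ p in polarCoord.target, (Iic R ×ˢ univ).indicator g p := by
        rw [← integral_comp_polarCoord_symm]
        refine setIntegral_congr_fun polarCoord.open_target.measurableSet fun p hp => ?_
        by_cases hpD : polarCoord.symm p ∈ D
        · rw [indicator_of_mem hpD, indicator_of_mem ((hmem hp.1).1 hpD)]
        · rw [indicator_of_notMem hpD, indicator_of_notMem (mt (hmem hp.1).2 hpD), smul_zero]
    _ = ∫ p in Ioc 0 R ×ˢ Ioo (-π) π, g p := by
        rw [setIntegral_indicator (measurableSet_Iic.prod MeasurableSet.univ), polarCoord_target,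
          prod_inter_prod, Ioi_inter_Iic, inter_univ]
    _ = ∫ r in Ioc 0 R, ∫ θ in Ioo (-π) π, g (r, θ) := by
        rw [Measure.volume_eq_prod, setIntegral_prod g (by rwa [← Measure.volume_eq_prod])]
    _ = ∫ r in 0..R, r • ∫ θ in (-π)..π, f (r * cos θ, r * sin θ) := by
        simp only [g, integral_smul, ← integral_Ioc_eq_integral_Ioo,
          ← intervalIntegral.integral_of_le (neg_le_self pi_pos.le),
          intervalIntegral.integral_of_le hR]
        rfl

theorem gaussianPDFReal_mul_gaussianPDFReal (σ m₁ m₂ x y : ℝ) :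
    gaussianPDFReal m₁ (σ ^ 2 / 2).toNNReal x * gaussianPDFReal m₂ (σ ^ 2 / 2).toNNReal y
      = 1 / (π * σ ^ 2) * exp (-((x - m₁) ^ 2 + (y - m₂) ^ 2) / σ ^ 2) := by
  have hv : ((σ ^ 2 / 2).toNNReal : ℝ) = σ ^ 2 / 2 := Real.coe_toNNReal _ (by positivity)
  have hsqrt : (√(π * σ ^ 2))⁻¹ * (√(π * σ ^ 2))⁻¹ = 1 / (π * σ ^ 2) := by
    rw [← mul_inv, mul_self_sqrt (by positivity), one_div]
  simp only [gaussianPDFReal, hv]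
  rw [show 2 * π * (σ ^ 2 / 2) = π * σ ^ 2 by ring, show 2 * (σ ^ 2 / 2) = σ ^ 2 by ring]
  rw [mul_mul_mul_comm, hsqrt, ← exp_add]
  ring_nf

theorem measureReal_prod_gaussianReal (m₁ m₂ : ℝ) {v₁ v₂ : NNReal} (hv₁ : v₁ ≠ 0)
    (hv₂ : v₂ ≠ 0) {A : Set (ℝ × ℝ)} (hA : MeasurableSet A) :
    ((gaussianReal m₁ v₁).prod (gaussianReal m₂ v₂)).real A
      = ∫ p in A, gaussianPDFReal m₁ v₁ p.1 * gaussianPDFReal m₂ v₂ p.2 := by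
  rw [gaussianReal_of_var_ne_zero _ hv₁, gaussianReal_of_var_ne_zero _ hv₂,
    prod_withDensity (measurable_gaussianPDF _ _) (measurable_gaussianPDF _ _),
    ← Measure.volume_eq_prod, measureReal_def, withDensity_apply _ hA,
    integral_eq_lintegral_of_nonneg_ae (.of_forall fun p =>
      mul_nonneg (gaussianPDFReal_nonneg _ _ _) (gaussianPDFReal_nonneg _ _ _)) (by fun_prop)]
  simp only [gaussianPDF, ENNReal.ofReal_mul (gaussianPDFReal_nonneg _ _ _)]

/-- The norm √(X²+Y²) of two independent Gaussians with common variance σ²/2 has the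
Rician density with parameters √a (a = m₁² + m₂²) and σ. -/
theorem stmt4 {Ω : Type*} [MeasureSpace Ω] [IsProbabilityMeasure (ℙ : Measure Ω)]
    (σ m₁ m₂ : ℝ) (hσ : 0 < σ) (X Y : Ω → ℝ) (hX : Measurable X) (hY : Measurable Y)
    (hXlaw : Measure.map X ℙ = gaussianReal m₁ (Real.toNNReal (σ ^ 2 / 2)))
    (hYlaw : Measure.map Y ℙ = gaussianReal m₂ (Real.toNNReal (σ ^ 2 / 2)))
    (hindep : IndepFun X Y ℙ) (y : ℝ) (hy : 0 ≤ y) :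
    (ℙ {ω | Real.sqrt (X ω ^ 2 + Y ω ^ 2) ≤ y}).toReal
      = ∫ x in (0:ℝ)..y, (2 * x / σ ^ 2) * Real.exp (-(x ^ 2 + (m₁ ^ 2 + m₂ ^ 2)) / σ ^ 2) *
          besselI0 (2 * x * Real.sqrt (m₁ ^ 2 + m₂ ^ 2) / σ ^ 2) := by
  set v := (σ ^ 2 / 2).toNNReal
  have hv : v ≠ 0 := by simpa [v] using pow_pos hσ 2
  set D := {p : ℝ × ℝ | √(p.1 ^ 2 + p.2 ^ 2) ≤ y}
  have hD : MeasurableSet D := measurableSet_le (by fun_prop) measurable_const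
  have hlaw : (ℙ : Measure Ω).map (fun ω => (X ω, Y ω))
      = (gaussianReal m₁ v).prod (gaussianReal m₂ v) := by
    rw [(indepFun_iff_map_prod_eq_prod_map_map hX.aemeasurable hY.aemeasurable).mp hindep,
      hXlaw, hYlaw]
  calc (ℙ {ω | √(X ω ^ 2 + Y ω ^ 2) ≤ y}).toReal
      = ((gaussianReal m₁ v).prod (gaussianReal m₂ v)).real D := by
        rw [← hlaw, measureReal_def, Measure.map_apply (hX.prodMk hY) hD]
        rfl
    _ = ∫ p in D, 1 / (π * σ ^ 2) * exp (-((p.1 - m₁) ^ 2 + (p.2 - m₂) ^ 2) / σ ^ 2) := by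
        simp only [measureReal_prod_gaussianReal m₁ m₂ hv hv hD, v,
          gaussianPDFReal_mul_gaussianPDFReal]
    _ = ∫ r in 0..y, r • ∫ θ in (-π)..π,
          1 / (π * σ ^ 2) * exp (-((r * cos θ - m₁) ^ 2 + (r * sin θ - m₂) ^ 2) / σ ^ 2) :=
        setIntegral_sqrt_le_eq_integral_polar (by fun_prop) hy
    _ = _ := by
        refine intervalIntegral.integral_congr fun r _ => ?_
        rw [smul_eq_mul, intervalIntegral.integral_const_mul, integral_exp_neg_sq_dist_circle]
        field_simp
end

section
/- Let σ > 0, A ≥ 0 and 0 ≤ u ≤ v. Then the integral of x e^{-x/σ²} I₀(2√(xA)/σ²) over [u, v] can be computed term by term: ∫_u^v x e^{-x/σ²} I₀( 2√(x A)/σ² ) dx = ∑_{i=0}^∞ ( A^i / ( σ^{4i} (i!)² ) ) ∫_u^v x^{i+1} e^{-x/σ²} dx, where the series on the right converges. -/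
open MeasureTheory Real

lemma aux_summable (B : ℝ) (hB : 0 ≤ B) :
    Summable (fun i : ℕ => B ^ i / ((Nat.factorial i : ℝ)) ^ 2) := by
  refine Summable.of_nonneg_of_le (fun i => by positivity) (fun i => ?_)
    (Real.summable_pow_div_factorial B)
  have h1 : (1 : ℝ) ≤ (Nat.factorial i : ℝ) := by exact_mod_cast Nat.one_le_iff_ne_zero.mpr (Nat.factorial_ne_zero i)
  have : (Nat.factorial i : ℝ) ≤ ((Nat.factorial i : ℝ)) ^ 2 := by nlinarith
  gcongr

lemma bessel_eq (x A s : ℝ) (hx : 0 ≤ x) (hA : 0 ≤ A) :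
    besselI0 (2 * Real.sqrt (x * A) / s ^ 2)
      = ∑' m : ℕ, (x * A) ^ m / (s ^ (4 * m) * ((Nat.factorial m : ℝ)) ^ 2) := by
  unfold besselI0
  congr 1; funext m
  have h1 : 2 * Real.sqrt (x * A) / s ^ 2 / 2 = Real.sqrt (x * A) / s ^ 2 := by ring
  rw [h1, div_pow, div_div]
  congr 1
  · rw [pow_mul, Real.sq_sqrt (mul_nonneg hx hA)]
  · rw [← pow_mul]; ring_nf

/-- Term-by-term integration of x e^{-x/σ²} I₀(2√(xA)/σ²) over [u, v]. -/
theorem stmt12 (σ A u v : ℝ) (hσ : 0 < σ) (hA : 0 ≤ A) (hu : 0 ≤ u) (huv : u ≤ v) :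
    Summable (fun i : ℕ => (A ^ i / (σ ^ (4 * i) * ((Nat.factorial i : ℝ)) ^ 2)) *
        ∫ x in u..v, x ^ (i + 1) * Real.exp (-x / σ ^ 2)) ∧
      (∫ x in u..v, x * Real.exp (-x / σ ^ 2) * besselI0 (2 * Real.sqrt (x * A) / σ ^ 2))
        = ∑' i : ℕ, (A ^ i / (σ ^ (4 * i) * ((Nat.factorial i : ℝ)) ^ 2)) *
            ∫ x in u..v, x ^ (i + 1) * Real.exp (-x / σ ^ 2) := by
  set c : ℕ → ℝ := fun i => A ^ i / (σ ^ (4 * i) * ((Nat.factorial i : ℝ)) ^ 2) with hc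
  have hc_nonneg : ∀ i, 0 ≤ c i := fun i => by
    simp only [hc]
    positivity
  -- continuous maps
  set F : ℕ → C(ℝ, ℝ) := fun i =>
    ⟨fun x => c i * (x ^ (i + 1) * Real.exp (-x / σ ^ 2)), by fun_prop⟩ with hF
  have hnorm : Summable fun i : ℕ =>
      ‖(F i).restrict (⟨Set.uIcc u v, isCompact_uIcc⟩ : TopologicalSpace.Compacts ℝ)‖ := by
    have hv : 0 ≤ v := le_trans hu huv
    have key : Summable (fun i : ℕ => c i * v ^ (i + 1)) := by
      have : Summable (fun i : ℕ => v * ((A * v / σ ^ 4) ^ i / ((Nat.factorial i : ℝ)) ^ 2)) :=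
        (aux_summable (A * v / σ ^ 4) (by positivity)).mul_left v
      refine this.congr fun i => ?_
      simp only [hc]
      rw [div_pow, mul_pow, ← pow_mul]
      field_simp
      ring
    refine key.of_nonneg_of_le (fun i => norm_nonneg _) (fun i => ?_)
    apply ContinuousMap.norm_le _ (by positivity) |>.mpr
    rintro ⟨x, hx⟩
    have hx' : x ∈ Set.Icc u v := by
      simpa [Set.uIcc_of_le huv] using hx
    obtain ⟨hx1, hx2⟩ := hx'
    simp only [ContinuousMap.restrict_apply, hF, ContinuousMap.coe_mk]
    rw [Real.norm_eq_abs, abs_mul, abs_of_nonneg (hc_nonneg i), abs_mul]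
    have hx0 : 0 ≤ x := le_trans hu hx1
    have hxv : x ≤ v := hx2
    have h1 : |x ^ (i + 1)| ≤ v ^ (i + 1) := by
      rw [abs_of_nonneg (by positivity)]; exact pow_le_pow_left₀ hx0 hxv _
    have h2 : |Real.exp (-x / σ ^ 2)| ≤ 1 := by
      rw [abs_of_nonneg (Real.exp_pos _).le, Real.exp_le_one_iff, neg_div]
      have : 0 ≤ x / σ ^ 2 := by positivity
      linarith
    calc c i * (|x ^ (i + 1)| * |Real.exp (-x / σ ^ 2)|)
        ≤ c i * (v ^ (i + 1) * 1) := by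
          apply mul_le_mul_of_nonneg_left _ (hc_nonneg i)
          exact mul_le_mul h1 h2 (abs_nonneg _) (by positivity)
      _ = c i * v ^ (i + 1) := by ring
  have hs := intervalIntegral.hasSum_intervalIntegral_of_summable_norm (a := u) (b := v) hnorm
  have hFi : ∀ i, (∫ x in u..v, F i x) =
      c i * ∫ x in u..v, x ^ (i + 1) * Real.exp (-x / σ ^ 2) := by
    intro i
    simp only [hF, ContinuousMap.coe_mk]
    exact intervalIntegral.integral_const_mul _ _
  have hint : (∫ x in u..v, ∑' i : ℕ, F i x)
      = ∫ x in u..v, x * Real.exp (-x / σ ^ 2) * besselI0 (2 * Real.sqrt (x * A) / σ ^ 2) := by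
    apply intervalIntegral.integral_congr
    intro x hx
    rw [Set.uIcc_of_le huv] at hx
    have hx0 : 0 ≤ x := le_trans hu hx.1
    dsimp only
    rw [bessel_eq x A σ hx0 hA]
    rw [← tsum_mul_left]
    congr 1; funext i
    simp only [hF, ContinuousMap.coe_mk, hc]
    rw [mul_pow, pow_succ]
    ring
  rw [hint] at hs
  have hs' : HasSum (fun i : ℕ => c i * ∫ x in u..v, x ^ (i + 1) * Real.exp (-x / σ ^ 2))
      (∫ x in u..v, x * Real.exp (-x / σ ^ 2) * besselI0 (2 * Real.sqrt (x * A) / σ ^ 2)) := by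
    refine hs.congr_fun fun i => (hFi i).symm
  exact ⟨hs'.summable, hs'.tsum_eq.symm⟩
end
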